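/- With e_n(t) = (1-t) e_{n-1}^*(t), for every positive integer n one has \int_0^1 e_{n-1}^*(t)^2 (1-t)\, dt = \frac{1}{2n}. -/

import Mathlib

open Polynomial MeasureTheory

/-- Falling factorial `c(c-1)⋯(c-m+1)` for real `c`. -/
noncomputable def fallFac (c : ℝ) (m : ℕ) : ℝ := ∏ i ∈ Finset.range m, (c - i)

/-- The identity-type polynomial `e_n(t) = ∑_{m=0}^n ((n)_m (-n)_m / (m!)^2) t^m`. -/
noncomputable def idPoly (n : ℕ) : Polynomial ℝ :=
  ∑ m ∈ Finset.range (n + 1),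
    Polynomial.C (fallFac (n : ℝ) m * fallFac (-(n : ℝ)) m / ((Nat.factorial m : ℝ)) ^ 2) *
      Polynomial.X ^ m

/-!
Since `e_n(1) = 0`, the quotient satisfies the Rodrigues-type formula
`n! e*_{n-1} = D^n [t^n (1-t)^(n-1)]`, checked coefficientwise. Hence
`∫ e*_{n-1}² (1-t) = (1/n!) ∫ e_n D^n [t^n (1-t)^(n-1)]`. Integrating by parts `n` times leaves
no boundary terms, because `t^n (1-t)^(n-1)` vanishes to order `n` at `0` and to order `n-1` at
`1` while `e_n(1) = 0`; what remains is `(-1)^n/n! ∫ D^n e_n · t^n (1-t)^(n-1)`. Here `D^n e_n`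
is the constant `n!` times the leading coefficient `(-1)^n C(2n-1, n)` of `e_n`, and the Beta
integral `n! (n-1)! / (2n)!` finishes the computation.
-/

open scoped Nat

theorem fallFac_natCast (n m : ℕ) : fallFac n m = n.descFactorial m := by
  rw [fallFac, ← descPochhammer_eval_eq_prod_range, descPochhammer_eval_eq_descFactorial]

theorem fallFac_neg_natCast (n m : ℕ) : fallFac (-n) m = (-1) ^ m * n.ascFactorial m := by
  have h := ascPochhammer_eval_neg_eq_descPochhammer (R := ℝ) (-(n : ℝ)) m
  rw [neg_neg] at h
  rw [fallFac, ← descPochhammer_eval_eq_prod_range, Nat.cast_ascFactorial, h, ← mul_assoc,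
    ← pow_add, Even.neg_one_pow ⟨m, rfl⟩, one_mul]

theorem coeff_idPoly (n m : ℕ) :
    (idPoly n).coeff m = (-1) ^ m * n.choose m * (n + m - 1).choose m := by
  have hcoeff : fallFac n m * fallFac (-n) m / (m ! : ℝ) ^ 2
      = (-1) ^ m * n.choose m * (n + m - 1).choose m := by
    rw [fallFac_natCast, fallFac_neg_natCast, Nat.descFactorial_eq_factorial_mul_choose,
      Nat.ascFactorial_eq_factorial_mul_choose']
    push_cast
    field_simp
  rw [idPoly, finsetSum_coeff]
  simp only [coeff_C_mul_X_pow, Finset.sum_ite_eq, Finset.mem_range, hcoeff]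
  split_ifs with h
  · rfl
  · simp [Nat.choose_eq_zero_of_lt (by omega : n < m)]

theorem coeff_one_sub_X_pow {R : Type*} [CommRing R] (k j : ℕ) :
    ((1 - X : R[X]) ^ k).coeff j = (-1 : R) ^ j * k.choose j := by
  have hterm (i : ℕ) : (-X : R[X]) ^ i * 1 ^ (k - i) * (k.choose i : R[X])
      = C ((-1 : R) ^ i * k.choose i) * X ^ i := by
    rw [neg_pow, one_pow, mul_one, C_mul, C_pow, C_neg, C_1, map_natCast]
    ring
  rw [sub_eq_add_neg, add_comm, add_pow, Finset.sum_congr rfl fun i _ => hterm i,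
    finsetSum_coeff]
  simp only [coeff_C_mul_X_pow, Finset.sum_ite_eq, Finset.mem_range]
  split_ifs with h
  · rfl
  · simp [Nat.choose_eq_zero_of_lt (by omega : k < j)]

theorem coeff_iterate_derivative_X_pow_mul_one_sub_X_pow (n j : ℕ) :
    (derivative^[n] (X ^ n * (1 - X : ℝ[X]) ^ (n - 1))).coeff j
      = (n ! : ℝ) * ((-1) ^ j * (n - 1).choose j * (n + j).choose j) := by
  rw [coeff_iterate_derivative, mul_comm, coeff_mul_X_pow, coeff_one_sub_X_pow,
    Nat.descFactorial_eq_factorial_mul_choose, add_comm j n, ← Nat.choose_symm_add, nsmul_eq_mul]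
  push_cast
  ring

theorem choose_succ_mul_choose_eq (N k : ℕ) :
    ((N + 1).choose (k + 1) * (N + k + 1).choose (k + 1) : ℝ)
      = N.choose (k + 1) * (N + k + 2).choose (k + 1) + N.choose k * (N + k + 1).choose k := by
  have hpascal : ((N + 1).choose (k + 1) : ℝ) = N.choose k + N.choose (k + 1) := by
    exact_mod_cast Nat.choose_succ_succ' N k
  have hN : (N.choose (k + 1) : ℝ) * (k + 1) = N.choose k * (N - k) := by
    rcases le_or_gt k N with h | h
    · have := Nat.choose_succ_right_eq N k
      rw [← Nat.cast_sub h]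
      exact_mod_cast this
    · simp [Nat.choose_eq_zero_of_lt h, Nat.choose_eq_zero_of_lt (h.trans k.lt_succ_self)]
  have hNk1 : ((N + k + 1).choose (k + 1) : ℝ) * (k + 1) = (N + k + 1).choose k * (N + 1) := by
    have := Nat.choose_succ_right_eq (N + k + 1) k
    rw [show N + k + 1 - k = N + 1 by omega] at this
    exact_mod_cast this
  have hNk2 :
      ((N + k + 2).choose (k + 1) : ℝ) * (k + 1) = (N + k + 1).choose k * (N + k + 2) := by
    exact_mod_cast (Nat.add_one_mul_choose_eq (N + k + 1) k).symm.trans (mul_comm _ _)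
  refine mul_right_cancel₀ (by positivity : (k + 1 : ℝ) ≠ 0) ?_
  linear_combination (N + 1 : ℝ) * ((N + k + 1).choose k : ℝ) * hpascal
    + ((N + 1).choose (k + 1) : ℝ) * hNk1 - (N.choose (k + 1) : ℝ) * hNk2
    - ((N + k + 1).choose k : ℝ) * hN

theorem idPoly_rodrigues {n : ℕ} (hn : 0 < n) :
    (1 - X) * derivative^[n] (X ^ n * (1 - X : ℝ[X]) ^ (n - 1)) = C (n ! : ℝ) * idPoly n := by
  obtain ⟨N, rfl⟩ : ∃ N, n = N + 1 := ⟨n - 1, by omega⟩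
  ext m
  rcases m with _ | k
  · rw [mul_coeff_zero, coeff_C_mul, coeff_idPoly,
      coeff_iterate_derivative_X_pow_mul_one_sub_X_pow]
    simp
  · rw [sub_mul, one_mul, coeff_sub, coeff_X_mul, coeff_C_mul, coeff_idPoly,
      coeff_iterate_derivative_X_pow_mul_one_sub_X_pow,
      coeff_iterate_derivative_X_pow_mul_one_sub_X_pow,
      show N + 1 + (k + 1) - 1 = N + k + 1 by omega, Nat.add_sub_cancel,
      show N + 1 + (k + 1) = N + k + 2 by omega, show N + 1 + k = N + k + 1 by omega]
    linear_combination (-1 : ℝ) ^ k * ((N + 1)! : ℝ) * choose_succ_mul_choose_eq N k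

theorem integral_eval_mul_derivative (f g : ℝ[X]) (a b : ℝ) :
    ∫ t in a..b, g.eval t * (derivative f).eval t
      = g.eval b * f.eval b - g.eval a * f.eval a
        - ∫ t in a..b, (derivative g).eval t * f.eval t :=
  intervalIntegral.integral_mul_deriv_eq_deriv_mul (fun t _ => g.hasDerivAt t)
    (fun t _ => f.hasDerivAt t) ((derivative g).continuous.intervalIntegrable _ _)
    ((derivative f).continuous.intervalIntegrable _ _)

theorem integral_eval_mul_iterate_derivative (f g : ℝ[X]) (a b : ℝ) (n : ℕ)
    (ha : ∀ k < n, (derivative^[k] g).eval a * (derivative^[n - 1 - k] f).eval a = 0)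
    (hb : ∀ k < n, (derivative^[k] g).eval b * (derivative^[n - 1 - k] f).eval b = 0) :
    ∫ t in a..b, g.eval t * (derivative^[n] f).eval t
      = (-1) ^ n * ∫ t in a..b, (derivative^[n] g).eval t * f.eval t := by
  induction n generalizing g with
  | zero => simp
  | succ n ih =>
    have ih' := ih (derivative g)
      (fun k hk => by
        have := ha (k + 1) (by omega)
        rwa [Function.iterate_succ_apply, show n + 1 - 1 - (k + 1) = n - 1 - k by omega] at this)
      (fun k hk => by
        have := hb (k + 1) (by omega)
        rwa [Function.iterate_succ_apply, show n + 1 - 1 - (k + 1) = n - 1 - k by omega] at this)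
    rw [Function.iterate_succ_apply', integral_eval_mul_derivative, ih',
      Function.iterate_succ_apply]
    have ha0 := ha 0 n.succ_pos
    have hb0 := hb 0 n.succ_pos
    simp only [Function.iterate_zero_apply, Nat.add_sub_cancel, Nat.sub_zero] at ha0 hb0
    rw [ha0, hb0]
    ring

theorem eval_iterate_derivative_eq_zero_of_pow_dvd {R : Type*} [CommRing R] {p : R[X]} {a : R}
    {k j : ℕ} (h : (X - C a) ^ k ∣ p) (hj : j < k) : (derivative^[j] p).eval a = 0 :=
  dvd_iff_isRoot.mp <| (dvd_pow_self _ (by omega)).trans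
    (pow_sub_dvd_iterate_derivative_of_pow_dvd j h)

theorem eval_zero_iterate_derivative_X_pow_mul {R : Type*} [CommRing R] (p : R[X]) {n j : ℕ}
    (hj : j < n) : (derivative^[j] (X ^ n * p)).eval 0 = 0 :=
  eval_iterate_derivative_eq_zero_of_pow_dvd (by simp [dvd_mul_right]) hj

theorem eval_one_iterate_derivative_mul_one_sub_X_pow {R : Type*} [CommRing R] (p : R[X])
    {m j : ℕ} (hj : j < m) : (derivative^[j] (p * (1 - X) ^ m)).eval 1 = 0 := by
  have h : X - C 1 ∣ (1 - X : R[X]) := ⟨-1, by rw [C_1]; ring⟩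
  exact eval_iterate_derivative_eq_zero_of_pow_dvd ((pow_dvd_pow_of_dvd h m).mul_left p) hj

theorem integral_pow_mul_one_sub_pow (a b : ℕ) :
    ∫ t in (0 : ℝ)..1, t ^ a * (1 - t) ^ b = a ! * b ! / (a + b + 1)! := by
  induction b generalizing a with
  | zero =>
    simp only [pow_zero, mul_one, integral_pow, one_pow, zero_pow a.succ_ne_zero, sub_zero,
      Nat.factorial_zero, add_zero, Nat.factorial_succ]
    push_cast
    field_simp
  | succ b ih =>
    have hparts : (a + 1 : ℝ) * ∫ t in (0 : ℝ)..1, t ^ a * (1 - t) ^ (b + 1)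
        = (b + 1) * ∫ t in (0 : ℝ)..1, t ^ (a + 1) * (1 - t) ^ b := by
      have h := integral_eval_mul_derivative (X ^ (a + 1)) ((1 - X) ^ (b + 1)) 0 1
      simp only [derivative_pow, eval_mul, eval_pow, eval_sub, eval_one, eval_X, eval_C,
        derivative_sub, derivative_one, derivative_X, eval_zero, Nat.add_sub_cancel] at h
      rw [← intervalIntegral.integral_const_mul, ← intervalIntegral.integral_const_mul]
      convert h using 1
      · congr 1; ext t; push_cast; ring
      · simp only [sub_self, zero_pow b.succ_ne_zero, zero_pow a.succ_ne_zero, zero_mul, mul_zero,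
          zero_sub, ← intervalIntegral.integral_neg]
        congr 1; ext t; push_cast; ring
    rw [ih, show a + 1 + b + 1 = a + (b + 1) + 1 by omega] at hparts
    refine mul_left_cancel₀ (by positivity : (a + 1 : ℝ) ≠ 0) ?_
    rw [hparts, Nat.factorial_succ a, Nat.factorial_succ b]
    push_cast
    ring

theorem iterate_derivative_idPoly (n : ℕ) :
    derivative^[n] (idPoly n) = C ((n ! : ℝ) * ((-1) ^ n * (2 * n - 1).choose n)) := by
  ext j
  rw [coeff_iterate_derivative, coeff_idPoly, coeff_C]
  rcases j with _ | j
  · simp [Nat.descFactorial_self, two_mul]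
  · simp [Nat.choose_eq_zero_of_lt (by omega : n < j + 1 + n)]

theorem integral_iterate_derivative_idPoly_mul {n : ℕ} (hn : 0 < n) :
    ∫ t in (0 : ℝ)..1,
        (derivative^[n] (idPoly n)).eval t * (X ^ n * (1 - X : ℝ[X]) ^ (n - 1)).eval t
      = (-1) ^ n * n ! / (2 * n) := by
  obtain ⟨N, rfl⟩ : ∃ N, n = N + 1 := ⟨n - 1, by omega⟩
  simp only [iterate_derivative_idPoly, eval_C, eval_mul, eval_pow, eval_sub, eval_one, eval_X,
    intervalIntegral.integral_const_mul, integral_pow_mul_one_sub_pow]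
  have hchoose := Nat.choose_mul_factorial_mul_factorial (show N + 1 ≤ 2 * N + 1 by omega)
  rw [show 2 * N + 1 - (N + 1) = N by omega] at hchoose
  rw [Nat.add_sub_cancel, show 2 * (N + 1) - 1 = 2 * N + 1 by omega,
    show N + 1 + N + 1 = 2 * N + 1 + 1 by omega, Nat.factorial_succ (2 * N + 1), ← hchoose]
  have hpos : ((2 * N + 1).choose (N + 1) : ℝ) ≠ 0 := by
    exact_mod_cast (Nat.choose_pos (by omega)).ne'
  push_cast
  field_simp
  ring

theorem factorPoly_norm (n : ℕ) (hn : 0 < n) (q : Polynomial ℝ)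
    (hq : idPoly n = (1 - Polynomial.X) * q) :
    ∫ t in (0:ℝ)..1, (q.eval t) ^ 2 * (1 - t) = 1 / (2 * (n : ℝ)) := by
  set f : ℝ[X] := X ^ n * (1 - X) ^ (n - 1)
  have hqf : C (n ! : ℝ) * q = derivative^[n] f := by
    have h1X : (1 - X : ℝ[X]) ≠ 0 := fun h => by simpa using congrArg (eval 0) h
    refine mul_left_cancel₀ h1X ?_
    rw [idPoly_rodrigues hn, hq]
    ring
  have hintegrand (t : ℝ) : q.eval t ^ 2 * (1 - t)
      = (n ! : ℝ)⁻¹ * ((idPoly n).eval t * (derivative^[n] f).eval t) := by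
    rw [← hqf, hq]
    simp only [eval_mul, eval_sub, eval_one, eval_X, eval_C]
    field_simp
  have hparts := integral_eval_mul_iterate_derivative f (idPoly n) 0 1 n
    (fun k hk => by rw [eval_zero_iterate_derivative_X_pow_mul _ (by omega), mul_zero])
    (fun k hk => by
      rcases k with _ | k
      · simp [hq]
      · rw [eval_one_iterate_derivative_mul_one_sub_X_pow _ (by omega), mul_zero])
  simp_rw [hintegrand]
  rw [intervalIntegral.integral_const_mul, hparts, integral_iterate_derivative_idPoly_mul hn]
  field_simp
  rw [← pow_mul, mul_comm, pow_mul, neg_one_sq, one_pow]
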